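/- For u ≠ 1, v ≠ 1 with uv ≠ 1, and nonnegative integers m, n: H_m(x|u) H_n(x|v) = H_{m+n}(x|uv) + (u(1−v)/(1−uv)) ∑_{r=1}^{m} C(m,r) H_r(u) H_{m+n−r}(x|uv) + (v(1−u)/(1−uv)) ∑_{s=1}^{n} C(n,s) H_s(v) H_{m+n−s}(x|uv). -/

import Mathlib

/-!
Write `F_w(t) = (1 - w) / (eᵗ - w)`. Dividing `eˢ⁺ᵗ - uv = (eᵗ - u)(eˢ - v) + u(eˢ - v) + v(eᵗ - u)`
by `(eᵗ - u)(eˢ - v)(eˢ⁺ᵗ - uv)` gives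
`(1 - uv) F_u(t) F_v(s) = ((1 - u)(1 - v) + u(1 - v) F_u(t) + v(1 - u) F_v(s)) F_{uv}(s + t)`.
Multiply by `e^{x(s+t)}` and compare the coefficients of `tᵐ sⁿ`: the one of
`F_{uv}(s + t) e^{x(s+t)}` is `H_{m+n}(x|uv) / (m! n!)`, and `H_0(w) = 1` merges the constant terms.
-/

open Finset PowerSeries
open scoped Nat

namespace Finset

theorem sum_antidiagonal_choose_shift {R : Type*} [CommSemiring R] (F : ℕ → ℕ → R) (a b n : ℕ) :
    ∑ p ∈ antidiagonal n, ((a + p.1).choose a * (b + p.2).choose b : R) * F (a + p.1) (b + p.2)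
      = ∑ q ∈ antidiagonal (a + b + n), (q.1.choose a * q.2.choose b : R) * F q.1 q.2 := by
  refine sum_of_injOn (fun p => (a + p.1, b + p.2)) ?_ ?_ ?_ (fun _ _ => rfl)
  · intro p _ p' _ h
    simp only [Prod.mk.injEq, Nat.add_left_cancel_iff] at h
    exact Prod.ext h.1 h.2
  · intro p hp
    simp only [HasAntidiagonal.mem_antidiagonal, mem_coe] at hp ⊢
    omega
  · rintro ⟨i, j⟩ hq hnot
    rw [HasAntidiagonal.mem_antidiagonal] at hq
    by_cases hij : a ≤ i ∧ b ≤ j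
    · exact absurd ⟨(i - a, j - b), by simp; omega, by simp; omega⟩ hnot
    · rcases not_and_or.mp hij with h | h <;> simp [Nat.choose_eq_zero_of_lt (not_le.mp h)]

theorem sum_range_succ_eq_add_sum_Icc {M : Type*} [AddCommMonoid M] (f : ℕ → M) (N : ℕ) :
    ∑ r ∈ range (N + 1), f r = f 0 + ∑ r ∈ Icc 1 N, f r := by
  rw [Nat.range_succ_eq_Icc_zero, ← add_sum_Ioc_eq_sum_Icc N.zero_le, ← Icc_add_one_left_eq_Ioc,
    zero_add]

end Finset

namespace PowerSeries

variable {R : Type*} [CommSemiring R]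

/-- `f(X) ↦ f(X + Y)`, where in `R⟦X⟧⟦X⟧` the inner variable is `X` and the outer one `Y`. -/
noncomputable def substAdd : R⟦X⟧ →+* R⟦X⟧⟦X⟧ where
  toFun f := mk fun n => mk fun m => ((m + n).choose m : R) * coeff (m + n) f
  map_one' := by
    ext n m
    rcases n with _ | n <;> rcases m with _ | m <;> simp [coeff_one]
  map_mul' f g := by
    ext n m
    simp only [coeff_mk, coeff_mul, map_sum]
    calc ((m + n).choose m : R) * ∑ k ∈ antidiagonal (m + n), coeff k.1 f * coeff k.2 g
        = ∑ k ∈ antidiagonal (m + n), ∑ q ∈ antidiagonal m,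
            (k.1.choose q.1 * k.2.choose q.2 : R) * (coeff k.1 f * coeff k.2 g) := by
          rw [mul_sum]
          refine sum_congr rfl fun k hk => ?_
          rw [HasAntidiagonal.mem_antidiagonal] at hk
          rw [← hk, Nat.add_choose_eq, Nat.cast_sum, sum_mul]
          push_cast
          rfl
      _ = ∑ q ∈ antidiagonal m, ∑ p ∈ antidiagonal n,
            ((q.1 + p.1).choose q.1 * (q.2 + p.2).choose q.2 : R)
              * (coeff (q.1 + p.1) f * coeff (q.2 + p.2) g) := by
          rw [sum_comm]
          refine sum_congr rfl fun q hq => ?_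
          rw [HasAntidiagonal.mem_antidiagonal] at hq
          rw [sum_antidiagonal_choose_shift (fun i j => coeff i f * coeff j g), hq]
      _ = _ := by
          rw [sum_comm]
          refine sum_congr rfl fun p _ => sum_congr rfl fun q _ => ?_
          ring
  map_zero' := by ext; simp
  map_add' f g := by ext; simp [mul_add]

@[simp]
theorem coeff_coeff_substAdd (f : R⟦X⟧) (m n : ℕ) :
    coeff m (coeff n (substAdd f)) = ((m + n).choose m : R) * coeff (m + n) f := by
  simp [substAdd]

theorem substAdd_C (r : R) : substAdd (C r) = C (C r) := by
  ext n m
  rw [coeff_coeff_substAdd, coeff_C, coeff_C]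
  rcases n with _ | n <;> rcases m with _ | m <;> simp [coeff_C]

theorem coeff_coeff_C_mul_map_C (f g : R⟦X⟧) (m n : ℕ) :
    coeff m (coeff n (C f * map C g)) = coeff m f * coeff n g := by
  rw [coeff_C_mul, coeff_map, coeff_mul_C]

theorem coeff_coeff_map_C_mul (g : R⟦X⟧) (Φ : R⟦X⟧⟦X⟧) (m n : ℕ) :
    coeff m (coeff n (map C g * Φ)) = coeff n (g * mk fun k => coeff m (coeff k Φ)) := by
  rw [coeff_mul, map_sum, coeff_mul]
  refine sum_congr rfl fun p _ => ?_
  rw [coeff_map, coeff_C_mul, coeff_mk]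

theorem substAdd_rescale_exp {A : Type*} [CommRing A] [Algebra ℚ A] (a : A) :
    substAdd (rescale a (exp A)) = C (rescale a (exp A)) * map C (rescale a (exp A)) := by
  ext n m
  rw [coeff_coeff_substAdd, coeff_coeff_C_mul_map_C]
  simp only [coeff_rescale, coeff_exp]
  have hchoose : ((m + n).choose m : ℚ) * (1 / (m + n)!) = 1 / m ! * (1 / n !) := by
    rw [Nat.cast_add_choose]
    field_simp
  calc _ = a ^ m * a ^ n * algebraMap ℚ A (((m + n).choose m : ℚ) * (1 / (m + n)!)) := by
        rw [map_mul, map_natCast, pow_add]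
        ring
    _ = _ := by
        rw [hchoose, map_mul]
        ring

variable {K : Type*} [Field K]

def egf (a : ℕ → K) : K⟦X⟧ := mk fun n => a n * (n ! : K)⁻¹

@[simp]
theorem coeff_egf (a : ℕ → K) (n : ℕ) : coeff n (egf a) = a n * (n ! : K)⁻¹ := coeff_mk _ _

variable [CharZero K]

theorem coeff_egf_mul_egf (a b : ℕ → K) (N : ℕ) :
    coeff N (egf a * egf b) = (N ! : K)⁻¹ * ∑ r ∈ range (N + 1), N.choose r * a r * b (N - r) := by
  rw [coeff_mul, Nat.sum_antidiagonal_eq_sum_range_succ_mk, mul_sum]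
  refine sum_congr rfl fun r hr => ?_
  rw [Nat.cast_choose K (Nat.lt_succ_iff.mp (mem_range.mp hr)), coeff_egf, coeff_egf]
  field_simp [Nat.factorial_ne_zero]

theorem coeff_substAdd_egf (c : ℕ → K) (n : ℕ) :
    coeff n (substAdd (egf c)) = C (n ! : K)⁻¹ * egf fun k => c (k + n) := by
  ext m
  rw [coeff_coeff_substAdd, coeff_egf, coeff_C_mul, coeff_egf, Nat.cast_add_choose]
  field_simp [Nat.factorial_ne_zero]

theorem coeff_coeff_substAdd_egf (c : ℕ → K) (m n : ℕ) :
    coeff m (coeff n (substAdd (egf c))) = c (m + n) * (m ! : K)⁻¹ * (n ! : K)⁻¹ := by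
  rw [coeff_substAdd_egf, coeff_C_mul, coeff_egf]
  ring

theorem coeff_egf_mul_coeff_substAdd_egf (a c : ℕ → K) (m n : ℕ) :
    coeff m (egf a * coeff n (substAdd (egf c)))
      = (m ! : K)⁻¹ * (n ! : K)⁻¹ * ∑ r ∈ range (m + 1), m.choose r * a r * c (m + n - r) := by
  rw [coeff_substAdd_egf, mul_left_comm, coeff_C_mul, coeff_egf_mul_egf,
    mul_left_comm, mul_assoc]
  congr 2
  refine sum_congr rfl fun r hr => ?_
  rw [Nat.sub_add_comm (Nat.lt_succ_iff.mp (mem_range.mp hr))]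

theorem coeff_coeff_map_C_egf_mul_substAdd_egf (b c : ℕ → K) (m n : ℕ) :
    coeff m (coeff n (map C (egf b) * substAdd (egf c)))
      = (m ! : K)⁻¹ * (n ! : K)⁻¹ * ∑ s ∈ range (n + 1), n.choose s * b s * c (m + n - s) := by
  have hcol : (mk fun k => coeff m (coeff k (substAdd (egf c))))
      = C (m ! : K)⁻¹ * egf fun k => c (m + k) := by
    ext k
    rw [coeff_mk, coeff_substAdd_egf, coeff_C_mul, coeff_egf, coeff_C_mul, coeff_egf]
    ring
  rw [coeff_coeff_map_C_mul, hcol, mul_left_comm, coeff_C_mul, coeff_egf_mul_egf, mul_assoc]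
  congr 2
  refine sum_congr rfl fun s hs => ?_
  rw [Nat.add_sub_assoc (Nat.lt_succ_iff.mp (mem_range.mp hs))]

end PowerSeries

theorem one_sub_mul_mul_eq_of_mul_sub_eq {S : Type*} [CommRing S] [IsDomain S]
    {a b u v p q f g F G k : S} (ha : a - u ≠ 0) (hb : b - v ≠ 0) (hab : a * b - u * v ≠ 0)
    (hf : f * (a - u) = (1 - u) * p) (hg : g * (b - v) = (1 - v) * q)
    (hF : F * (a - u) = 1 - u) (hG : G * (b - v) = 1 - v)
    (hk : k * (a * b - u * v) = (1 - u * v) * (p * q)) :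
    (1 - u * v) * (f * g) = ((1 - u) * (1 - v) + u * (1 - v) * F + v * (1 - u) * G) * k := by
  refine mul_right_cancel₀ (mul_ne_zero (mul_ne_zero ha hb) hab) ?_
  linear_combination (1 - u * v) * (a * b - u * v) * g * (b - v) * hf
    + (1 - u * v) * (a * b - u * v) * (1 - u) * p * hg
    - ((1 - u) * (1 - v) * (a - u) * (b - v) + u * (1 - v) * F * (a - u) * (b - v)
        + v * (1 - u) * G * (b - v) * (a - u)) * hk
    - u * (1 - v) * (b - v) * (1 - u * v) * p * q * hF
    - v * (1 - u) * (a - u) * (1 - u * v) * p * q * hG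

section FrobeniusEuler

variable {K : Type*} [Field K] [CharZero K]

theorem map_mul_exp_sub_C_eq {S : Type*} [CommRing S] (ι : K⟦X⟧ →+* S) {f : K⟦X⟧} {w x : K}
    (h : f * (exp K - C w) = (1 - w) • rescale x (exp K)) :
    ι f * (ι (exp K) - ι (C w)) = (1 - ι (C w)) * ι (rescale x (exp K)) := by
  rw [smul_eq_C_mul] at h
  simpa only [map_mul, map_sub, map_one] using congrArg ι h

theorem apply_zero_eq_one_of_egf_mul_exp_sub_C {a : ℕ → K} {w x : K} (hw : w ≠ 1)
    (h : egf a * (exp K - C w) = (1 - w) • rescale x (exp K)) : a 0 = 1 := by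
  have h0 := congrArg (coeff 0) h
  rw [coeff_smul, coeff_rescale, coeff_exp, coeff_zero_eq_constantCoeff_apply, map_mul,
    ← coeff_zero_eq_constantCoeff_apply, coeff_egf] at h0
  simp only [map_sub, constantCoeff_exp, constantCoeff_C, Nat.factorial_zero, Nat.cast_one,
    inv_one, mul_one, pow_zero, div_one, map_one, smul_eq_mul] at h0
  exact mul_right_cancel₀ (sub_ne_zero.mpr hw.symm) (h0.trans (one_mul _).symm)

theorem ne_zero_of_coeff_zero_coeff_zero_ne_zero {R : Type*} [Semiring R] {Φ : R⟦X⟧⟦X⟧}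
    (h : coeff 0 (coeff 0 Φ) ≠ 0) : Φ ≠ 0 :=
  fun hΦ => h (by rw [hΦ, map_zero, map_zero])

theorem egf_mul_egf_eq_of_egf_mul_exp_sub_C {a b α β c : ℕ → K} {u v x : K}
    (hu : u ≠ 1) (hv : v ≠ 1) (huv : u * v ≠ 1)
    (ha : egf a * (exp K - C u) = (1 - u) • rescale x (exp K))
    (hb : egf b * (exp K - C v) = (1 - v) • rescale x (exp K))
    (hα : egf α * (exp K - C u) = (1 - u) • rescale 0 (exp K))
    (hβ : egf β * (exp K - C v) = (1 - v) • rescale 0 (exp K))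
    (hc : egf c * (exp K - C (u * v)) = (1 - u * v) • rescale x (exp K)) :
    C (C (1 - u * v)) * (C (egf a) * map C (egf b))
      = C (C ((1 - u) * (1 - v))) * substAdd (egf c)
        + C (C (u * (1 - v))) * (C (egf α) * substAdd (egf c))
        + C (C (v * (1 - u))) * (map C (egf β) * substAdd (egf c)) := by
  have hexp := substAdd_rescale_exp (1 : K)
  rw [rescale_one, RingHom.id_apply] at hexp
  have hrel_a := map_mul_exp_sub_C_eq (C (R := K⟦X⟧)) ha
  have hrel_b := map_mul_exp_sub_C_eq (map (C (R := K))) hb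
  have hrel_α := map_mul_exp_sub_C_eq (C (R := K⟦X⟧)) hα
  have hrel_β := map_mul_exp_sub_C_eq (map (C (R := K))) hβ
  have hrel_c := map_mul_exp_sub_C_eq substAdd hc
  simp only [map_C, rescale_zero, RingHom.comp_apply, constantCoeff_exp, map_one, mul_one]
    at hrel_b hrel_α hrel_β
  rw [substAdd_C, hexp, substAdd_rescale_exp] at hrel_c
  simp only [map_mul] at hrel_c
  have hne_a : C (exp K) - C (C u) ≠ 0 :=
    ne_zero_of_coeff_zero_coeff_zero_ne_zero (by simpa using sub_ne_zero.mpr hu.symm)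
  have hne_b : map C (exp K) - C (C v) ≠ 0 :=
    ne_zero_of_coeff_zero_coeff_zero_ne_zero (by simpa using sub_ne_zero.mpr hv.symm)
  have hne_ab : C (exp K) * map C (exp K) - C (C u) * C (C v) ≠ 0 :=
    ne_zero_of_coeff_zero_coeff_zero_ne_zero (by simpa using sub_ne_zero.mpr huv.symm)
  have key := one_sub_mul_mul_eq_of_mul_sub_eq hne_a hne_b hne_ab hrel_a hrel_b hrel_α hrel_β hrel_c
  simp only [map_mul, map_sub, map_one]
  linear_combination key

end FrobeniusEuler

theorem carlitz_product_frobenius_euler (H : ℂ → ℕ → ℂ → ℂ)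
    (hH : ∀ w : ℂ, w ≠ 1 → ∀ x : ℂ,
      (PowerSeries.mk fun n => H w n x * (n.factorial : ℂ)⁻¹)
          * (PowerSeries.exp ℂ - PowerSeries.C (R := ℂ) w)
        = (1 - w) • PowerSeries.rescale x (PowerSeries.exp ℂ))
    (u v : ℂ) (hu : u ≠ 1) (hv : v ≠ 1) (huv : u * v ≠ 1) (m n : ℕ) :
    ∀ x : ℂ,
      H u m x * H v n x
        = H (u * v) (m + n) x
          + (u * (1 - v) / (1 - u * v))
              * ∑ r ∈ Finset.Icc 1 m, (m.choose r : ℂ) * H u r 0 * H (u * v) (m + n - r) x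
          + (v * (1 - u) / (1 - u * v))
              * ∑ s ∈ Finset.Icc 1 n, (n.choose s : ℂ) * H v s 0 * H (u * v) (m + n - s) x := by
  intro x
  have hgf := egf_mul_egf_eq_of_egf_mul_exp_sub_C (a := fun k => H u k x)
    (b := fun k => H v k x) (α := fun k => H u k 0) (β := fun k => H v k 0)
    (c := fun k => H (u * v) k x) hu hv huv (hH u hu x) (hH v hv x) (hH u hu 0) (hH v hv 0)
    (hH (u * v) huv x)
  have hcoeff := congrArg (fun Φ => coeff m (coeff n Φ)) hgf
  simp only [map_add, coeff_C_mul, coeff_map, coeff_mul_C, coeff_egf, coeff_coeff_substAdd_egf,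
    coeff_egf_mul_coeff_substAdd_egf, coeff_coeff_map_C_egf_mul_substAdd_egf,
    sum_range_succ_eq_add_sum_Icc, apply_zero_eq_one_of_egf_mul_exp_sub_C hu (hH u hu 0),
    apply_zero_eq_one_of_egf_mul_exp_sub_C hv (hH v hv 0), Nat.choose_zero_right,
    Nat.cast_one, mul_one, one_mul, Nat.sub_zero] at hcoeff
  have h1uv : 1 - u * v ≠ 0 := sub_ne_zero.mpr huv.symm
  field_simp at hcoeff ⊢
  rw [div_left_inj' (by simp [Nat.factorial_ne_zero])] at hcoeff
  linear_combination hcoeff
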